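/- arXiv:1502.05759 — 2 statements merged into one kernel-verified Lean document; each statement's English description precedes it below -/
import Mathlib

section
/- The map from SU(3) × (0,1) to ℂ³ × ℂ³ sending (M, t) to (t·c₁, √(1−t²)·c̄₂), where c₁ and c₂ are the first and second columns of M and c̄₂ is the componentwise complex conjugate of c₂, is a homeomorphism onto X = {(z,w) ∈ (ℂ³∖{0}) × (ℂ³∖{0}) : z·w = 0, ‖z‖² + ‖w‖² = 1} with its subspace topology. -/
/-!
An element of SU(3) is the same thing as an orthonormal pair of columns `(c₀, c₁)`: unitarity
and `det = 1` force the third column to be `conj (c₀ × c₁)`. A point `(z, w)` of `X` is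
recovered from `t = ‖z‖` (so that `‖w‖ = √(1 - t²)`) and the pair `(z / ‖z‖, conj w / ‖w‖)`,
which is orthonormal because `z · w = 0`. Normalization is continuous away from `0`, so both
directions are continuous.
-/

noncomputable abbrev C3 := EuclideanSpace ℂ (Fin 3)

noncomputable def dotProd (z w : C3) : ℂ := ∑ i, z i * w i

noncomputable def vec (f : Fin 3 → ℂ) : C3 := WithLp.toLp 2 f

noncomputable abbrev SU3 := Matrix.specialUnitaryGroup (Fin 3) ℂ

def spaceX : Set (C3 × C3) :=
  {p | p.1 ≠ 0 ∧ p.2 ≠ 0 ∧ dotProd p.1 p.2 = 0 ∧ ‖p.1‖ ^ 2 + ‖p.2‖ ^ 2 = 1}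

section SpecialUnitaryThree

open Matrix

variable {R : Type*} [CommRing R] [StarRing R]

lemma star_cross (u v : Fin 3 → R) : star (u ⨯₃ v) = star u ⨯₃ star v := by
  ext i; fin_cases i <;> simp [cross_apply]

lemma star_cross_dotProduct_cross (u v : Fin 3 → R) :
    star (u ⨯₃ v) ⬝ᵥ (u ⨯₃ v) =
      (star u ⬝ᵥ u) * (star v ⬝ᵥ v) - (star u ⬝ᵥ v) * star (star u ⬝ᵥ v) := by
  rw [star_cross, cross_dot_cross, ← star_dotProduct]

omit [StarRing R] in
lemma adjugate_fin_three_two (A : Matrix (Fin 3) (Fin 3) R) : A.adjugate 2 = Aᵀ 0 ⨯₃ Aᵀ 1 := by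
  ext i; fin_cases i <;> simp [adjugate_fin_three, cross_apply] <;> ring

theorem mem_specialUnitaryGroup_fin_three_iff {A : Matrix (Fin 3) (Fin 3) R} :
    A ∈ specialUnitaryGroup (Fin 3) R ↔
      star (Aᵀ 0) ⬝ᵥ Aᵀ 0 = 1 ∧ star (Aᵀ 1) ⬝ᵥ Aᵀ 1 = 1 ∧ star (Aᵀ 0) ⬝ᵥ Aᵀ 1 = 0 ∧
        Aᵀ 2 = star (Aᵀ 0 ⨯₃ Aᵀ 1) := by
  have hcol : ∀ j k, (star A * A) j k = star (Aᵀ j) ⬝ᵥ Aᵀ k := fun _ _ => rfl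
  rw [mem_specialUnitaryGroup_iff, mem_unitaryGroup_iff']
  constructor
  · rintro ⟨hunit, hdet⟩
    -- `star A = A⁻¹ = adjugate A`, and the last row of the adjugate is `c₀ ⨯₃ c₁`.
    have hadj : star A = A.adjugate := calc
      star A = star A * (A * A.adjugate) := by rw [mul_adjugate, hdet, one_smul, mul_one]
      _ = A.adjugate := by rw [← Matrix.mul_assoc, hunit, Matrix.one_mul]
    refine ⟨?_, ?_, ?_, ?_⟩
    · simpa [hcol] using congrFun₂ hunit 0 0
    · simpa [hcol] using congrFun₂ hunit 1 1
    · simpa [hcol] using congrFun₂ hunit 0 1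
    · rw [← adjugate_fin_three_two, ← hadj]
      ext i; simp
  · rintro ⟨hu, hv, huv, hw⟩
    have hcross : star (Aᵀ 0 ⨯₃ Aᵀ 1) ⬝ᵥ (Aᵀ 0 ⨯₃ Aᵀ 1) = 1 := by
      rw [star_cross_dotProduct_cross, hu, hv, huv]; simp
    constructor
    · ext j k
      rw [hcol]
      fin_cases j <;> fin_cases k <;>
        simp [hw, hu, hv, huv, hcross, star_dotProduct_star, star_dotProduct (Aᵀ 1),
          dotProduct_comm (Aᵀ 0 ⨯₃ Aᵀ 1), dot_self_cross, dot_cross_self]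
    -- `det A = c₂ ⬝ᵥ (c₀ ⨯₃ c₁) = ‖c₀ ⨯₃ c₁‖²`, which is `1` by Lagrange's identity.
    · have hrows : Aᵀ = ![Aᵀ 0, Aᵀ 1, Aᵀ 2] := by ext i j; fin_cases i <;> rfl
      rw [← det_transpose, hrows, ← triple_product_eq_det, triple_product_permutation,
        triple_product_permutation, hw, hcross]

def ofColsConjCross (u v : Fin 3 → R) : Matrix (Fin 3) (Fin 3) R :=
  (of ![u, v, star (u ⨯₃ v)])ᵀ

lemma ofColsConjCross_mem_specialUnitaryGroup {u v : Fin 3 → R} (hu : star u ⬝ᵥ u = 1)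
    (hv : star v ⬝ᵥ v = 1) (huv : star u ⬝ᵥ v = 0) :
    ofColsConjCross u v ∈ specialUnitaryGroup (Fin 3) R := by
  rw [mem_specialUnitaryGroup_fin_three_iff]
  exact ⟨hu, hv, huv, rfl⟩

lemma ofColsConjCross_of_mem_specialUnitaryGroup {A : Matrix (Fin 3) (Fin 3) R}
    (hA : A ∈ specialUnitaryGroup (Fin 3) R) : ofColsConjCross (Aᵀ 0) (Aᵀ 1) = A := by
  obtain ⟨-, -, -, hw⟩ := mem_specialUnitaryGroup_fin_three_iff.1 hA
  ext i j; fin_cases j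
  · rfl
  · rfl
  · exact (congrFun hw i).symm

omit [StarRing R] in
lemma continuous_cross [TopologicalSpace R] [IsTopologicalRing R] :
    Continuous fun p : (Fin 3 → R) × (Fin 3 → R) => p.1 ⨯₃ p.2 := by
  refine continuous_pi fun i => ?_
  fin_cases i <;> simp only [cross_apply] <;> fun_prop

lemma continuous_ofColsConjCross [TopologicalSpace R] [IsTopologicalRing R] [ContinuousStar R] :
    Continuous fun p : (Fin 3 → R) × (Fin 3 → R) => ofColsConjCross p.1 p.2 := by
  refine continuous_matrix fun i j => ?_
  fin_cases j
  · exact (continuous_apply i).comp continuous_fst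
  · exact (continuous_apply i).comp continuous_snd
  · exact (continuous_apply i).comp continuous_cross.star

end SpecialUnitaryThree


section Euclidean

open Matrix WithLp

variable {𝕜 ι : Type*} [RCLike 𝕜] [Fintype ι]

lemma ofReal_norm_sq_eq_star_dotProduct (x : EuclideanSpace 𝕜 ι) :
    ((‖x‖ ^ 2 : ℝ) : 𝕜) = star (ofLp x) ⬝ᵥ ofLp x := by
  rw [RCLike.ofReal_pow, ← inner_self_eq_norm_sq_to_K, EuclideanSpace.inner_eq_star_dotProduct,
    dotProduct_comm]

lemma norm_eq_one_iff_star_dotProduct {x : EuclideanSpace 𝕜 ι} :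
    ‖x‖ = 1 ↔ star (ofLp x) ⬝ᵥ ofLp x = 1 := by
  rw [← ofReal_norm_sq_eq_star_dotProduct, ← pow_eq_one_iff_of_nonneg (norm_nonneg x) two_ne_zero]
  exact_mod_cast Iff.rfl

noncomputable def normalizedCoords (x : EuclideanSpace 𝕜 ι) : ι → 𝕜 := (‖x‖⁻¹ : 𝕜) • ofLp x

lemma star_normalizedCoords_dotProduct_self {x : EuclideanSpace 𝕜 ι} (hx : x ≠ 0) :
    star (normalizedCoords x) ⬝ᵥ normalizedCoords x = 1 := by
  have h := norm_eq_one_iff_star_dotProduct.1 (norm_smul_inv_norm (𝕜 := 𝕜) hx)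
  rwa [ofLp_smul] at h

lemma norm_smul_normalizedCoords {x : EuclideanSpace 𝕜 ι} (hx : x ≠ 0) :
    (‖x‖ : 𝕜) • normalizedCoords x = ofLp x := by
  rw [normalizedCoords, smul_smul, mul_inv_cancel₀ (by simpa using hx), one_smul]

lemma norm_toLp_smul_of_star_dotProduct {f : ι → 𝕜} (hf : star f ⬝ᵥ f = 1) {c : ℝ} (hc : 0 ≤ c) :
    ‖toLp 2 ((c : 𝕜) • f)‖ = c := by
  rw [toLp_smul, norm_smul, norm_eq_one_iff_star_dotProduct.2 hf, mul_one, RCLike.norm_ofReal,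
    abs_of_nonneg hc]

lemma normalizedCoords_toLp_smul {f : ι → 𝕜} (hf : star f ⬝ᵥ f = 1) {c : ℝ} (hc : 0 < c) :
    normalizedCoords (toLp 2 ((c : 𝕜) • f)) = f := by
  rw [normalizedCoords, norm_toLp_smul_of_star_dotProduct hf hc.le, ofLp_toLp, smul_smul,
    ← RCLike.ofReal_inv, ← RCLike.ofReal_mul, inv_mul_cancel₀ hc.ne', RCLike.ofReal_one, one_smul]

lemma continuousOn_normalizedCoords :
    ContinuousOn (normalizedCoords : EuclideanSpace 𝕜 ι → ι → 𝕜) {0}ᶜ := by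
  unfold normalizedCoords
  refine ContinuousOn.smul (f := fun x : EuclideanSpace 𝕜 ι => (‖x‖⁻¹ : 𝕜)) ?_
    (PiLp.continuous_ofLp 2 fun _ : ι => 𝕜).continuousOn
  exact (RCLike.continuous_ofReal.comp continuous_norm).continuousOn.inv₀ (by simp)

end Euclidean

section SpaceX

open Matrix WithLp

noncomputable def toX (M : Matrix (Fin 3) (Fin 3) ℂ) (t : ℝ) : C3 × C3 :=
  (toLp 2 ((t : ℂ) • Mᵀ 0), toLp 2 ((√(1 - t ^ 2) : ℂ) • star (Mᵀ 1)))

noncomputable def ofX (p : C3 × C3) : Matrix (Fin 3) (Fin 3) ℂ :=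
  ofColsConjCross (normalizedCoords p.1) (star (normalizedCoords p.2))

variable {M : Matrix (Fin 3) (Fin 3) ℂ} {t : ℝ}

lemma norm_toX_fst (hM : M ∈ SU3) (ht : 0 ≤ t) : ‖(toX M t).1‖ = t :=
  norm_toLp_smul_of_star_dotProduct (mem_specialUnitaryGroup_fin_three_iff.1 hM).1 ht

lemma norm_toX_snd (hM : M ∈ SU3) : ‖(toX M t).2‖ = √(1 - t ^ 2) := by
  refine norm_toLp_smul_of_star_dotProduct ?_ (Real.sqrt_nonneg _)
  rw [star_star, dotProduct_comm]
  exact (mem_specialUnitaryGroup_fin_three_iff.1 hM).2.1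

lemma toX_mem_spaceX (hM : M ∈ SU3) (ht : t ∈ Set.Ioo 0 1) : toX M t ∈ spaceX := by
  obtain ⟨ht0, ht1⟩ := ht
  have hs : 0 < 1 - t ^ 2 := by nlinarith
  have hnz := norm_toX_fst hM ht0.le
  have hnw := norm_toX_snd (t := t) hM
  refine ⟨?_, ?_, ?_, ?_⟩
  · rw [← norm_pos_iff, hnz]; exact ht0
  · rw [← norm_pos_iff, hnw]; exact Real.sqrt_pos.2 hs
  · show (t : ℂ) • Mᵀ 0 ⬝ᵥ (√(1 - t ^ 2) : ℂ) • star (Mᵀ 1) = 0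
    rw [smul_dotProduct, dotProduct_smul, dotProduct_star, dotProduct_comm,
      (mem_specialUnitaryGroup_fin_three_iff.1 hM).2.2.1]
    simp
  · rw [hnz, hnw, Real.sq_sqrt hs.le]; ring

lemma norm_fst_mem_Ioo {p : C3 × C3} (hp : p ∈ spaceX) : ‖p.1‖ ∈ Set.Ioo 0 1 := by
  have hw : 0 < ‖p.2‖ := norm_pos_iff.2 hp.2.1
  exact ⟨norm_pos_iff.2 hp.1, by nlinarith [hp.2.2.2, norm_nonneg p.1]⟩

lemma ofX_mem_SU3 {p : C3 × C3} (hp : p ∈ spaceX) : ofX p ∈ SU3 := by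
  refine ofColsConjCross_mem_specialUnitaryGroup (star_normalizedCoords_dotProduct_self hp.1) ?_ ?_
  · rw [star_star, dotProduct_comm]
    exact star_normalizedCoords_dotProduct_self hp.2.1
  · rw [star_dotProduct_star, normalizedCoords, normalizedCoords, smul_dotProduct, dotProduct_smul,
      dotProduct_comm]
    have h : ofLp p.1 ⬝ᵥ ofLp p.2 = 0 := hp.2.2.1
    simp [h]

lemma ofX_toX (hM : M ∈ SU3) (ht : t ∈ Set.Ioo 0 1) : ofX (toX M t) = M := by
  obtain ⟨hu, hv, -, -⟩ := mem_specialUnitaryGroup_fin_three_iff.1 hM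
  have hs : 0 < √(1 - t ^ 2) := Real.sqrt_pos.2 (by nlinarith [ht.1, ht.2])
  have hv' : star (star (Mᵀ 1)) ⬝ᵥ star (Mᵀ 1) = 1 := by rw [star_star, dotProduct_comm, hv]
  have hcol₀ : normalizedCoords (toLp 2 ((t : ℂ) • Mᵀ 0)) = Mᵀ 0 :=
    normalizedCoords_toLp_smul hu ht.1
  have hcol₁ : normalizedCoords (toLp 2 ((√(1 - t ^ 2) : ℂ) • star (Mᵀ 1))) = star (Mᵀ 1) :=
    normalizedCoords_toLp_smul hv' hs
  rw [ofX, toX, hcol₀, hcol₁, star_star, ofColsConjCross_of_mem_specialUnitaryGroup hM]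

lemma toX_ofX {p : C3 × C3} (hp : p ∈ spaceX) : toX (ofX p) ‖p.1‖ = p := by
  have hsqrt : √(1 - ‖p.1‖ ^ 2) = ‖p.2‖ := by
    rw [← hp.2.2.2, add_sub_cancel_left, Real.sqrt_sq (norm_nonneg _)]
  ext : 1
  · exact congrArg (toLp 2) (norm_smul_normalizedCoords hp.1)
  · show toLp 2 ((√(1 - ‖p.1‖ ^ 2) : ℂ) • star (star (normalizedCoords p.2))) = p.2
    rw [star_star, hsqrt]
    exact congrArg (toLp 2) (norm_smul_normalizedCoords hp.2.1)

lemma continuous_toX : Continuous fun q : Matrix (Fin 3) (Fin 3) ℂ × ℝ => toX q.1 q.2 := by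
  unfold toX
  fun_prop

lemma continuousOn_ofX : ContinuousOn ofX spaceX := by
  have hfst : ContinuousOn (fun p : C3 × C3 => normalizedCoords p.1) spaceX :=
    continuousOn_normalizedCoords.comp continuous_fst.continuousOn fun _ hp => hp.1
  have hsnd : ContinuousOn (fun p : C3 × C3 => normalizedCoords p.2) spaceX :=
    continuousOn_normalizedCoords.comp continuous_snd.continuousOn fun _ hp => hp.2.1
  exact continuous_ofColsConjCross.comp_continuousOn (hfst.prodMk hsnd.star)

end SpaceX

noncomputable def homeomorphSpaceX : SU3 × Set.Ioo (0 : ℝ) 1 ≃ₜ spaceX where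
  toFun q := ⟨toX q.1 q.2, toX_mem_spaceX q.1.2 q.2.2⟩
  invFun p := (⟨ofX p, ofX_mem_SU3 p.2⟩, ⟨‖p.1.1‖, norm_fst_mem_Ioo p.2⟩)
  left_inv q :=
    Prod.ext (Subtype.ext (ofX_toX q.1.2 q.2.2)) (Subtype.ext (norm_toX_fst q.1.2 q.2.2.1.le))
  right_inv p := Subtype.ext (toX_ofX p.2)
  continuous_toFun :=
    (continuous_toX.comp (by fun_prop : Continuous fun q : SU3 × Set.Ioo (0 : ℝ) 1 =>
      ((q.1 : Matrix (Fin 3) (Fin 3) ℂ), (q.2 : ℝ)))).subtype_mk _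
  continuous_invFun :=
    (continuousOn_ofX.domRestrict.subtype_mk _).prodMk
      ((continuous_fst.comp continuous_subtype_val).norm.subtype_mk _)

theorem SU3_prod_Ioo_homeomorph_X :
    ∃ h : (SU3 × (Set.Ioo (0 : ℝ) 1)) ≃ₜ spaceX,
      ∀ (M : SU3) (t : Set.Ioo (0 : ℝ) 1),
        (h (M, t) : C3 × C3) =
          (vec fun i => ((t : ℝ) : ℂ) * (M : Matrix (Fin 3) (Fin 3) ℂ) i 0,
           vec fun i => ((Real.sqrt (1 - (t : ℝ) ^ 2) : ℝ) : ℂ) *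
             (starRingEnd ℂ) ((M : Matrix (Fin 3) (Fin 3) ℂ) i 1)) :=
  ⟨homeomorphSpaceX, fun _ _ => rfl⟩
end

section
/- For every real ε with 0 < ε < 1/2, the space W = {(z,w) ∈ ℂ³ × ℂ³ : z·w = 0, ‖z‖² + ‖w‖² = 1, and (‖z‖² < ε or ‖w‖² < ε)}, with the subspace topology, is homotopy equivalent to the disjoint union of two copies of the 5-sphere {w ∈ ℂ³ : ‖w‖ = 1}. -/
/-- The space `W`, depending on `ε`. -/
def spaceW (ε : ℝ) : Set (C3 × C3) :=
  {p | dotProd p.1 p.2 = 0 ∧ ‖p.1‖ ^ 2 + ‖p.2‖ ^ 2 = 1 ∧ (‖p.1‖ ^ 2 < ε ∨ ‖p.2‖ ^ 2 < ε)}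

/-!
Because `ε < 1/2`, the conditions `‖z‖² < ε` and `‖w‖² < ε` cannot hold simultaneously, so `W`
is the disjoint union of two relatively open pieces, exchanged by `(z, w) ↦ (w, z)`. On the piece
where `z` is small, replacing `z` by `t • z` and renormalising keeps `z·w = 0` and `‖z‖² < ε` for
`t ∈ [0, 1]`; at `t = 0` it lands in `{0} × S⁵`, so the piece deformation retracts onto `S⁵`.
-/

open Topology Set.Notation

section SumOfSpaces

variable {X Y X' Y' : Type*} [TopologicalSpace X] [TopologicalSpace Y]
  [TopologicalSpace X'] [TopologicalSpace Y']

lemma SeparatedNhds.isOpen_preimage_val_left {s t u : Set X} (hst : SeparatedNhds s t)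
    (hu : u ⊆ s ∪ t) : IsOpen (u ↓∩ s) := by
  obtain ⟨U, V, hU, -, hsU, htV, hUV⟩ := hst
  convert hU.preimage continuous_subtype_val using 1
  ext ⟨x, hx⟩
  refine ⟨fun h => hsU h, fun h => (hu hx).resolve_right fun ht => ?_⟩
  exact hUV.notMem_of_mem_left h (htV ht)

noncomputable def Homeomorph.Set.union {s t : Set X} (hst : SeparatedNhds s t) :
    ↥(s ∪ t) ≃ₜ s ⊕ t :=
  haveI := Classical.decPred (· ∈ s)
  ((Equiv.Set.union hst.disjoint).symm.toHomeomorphOfContinuousOpen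
    (continuous_sum_dom.2
      ⟨continuous_inclusion Set.subset_union_left, continuous_inclusion Set.subset_union_right⟩)
    (isOpenMap_sum.2
      ⟨(IsOpenEmbedding.inclusion Set.subset_union_left
          (hst.isOpen_preimage_val_left subset_rfl)).isOpenMap,
        (IsOpenEmbedding.inclusion Set.subset_union_right
          (hst.symm.isOpen_preimage_val_left (Set.union_comm s t).le)).isOpenMap⟩)).symm

namespace ContinuousMap

def sumMap (f : C(X, Y)) (g : C(X', Y')) : C(X ⊕ X', Y ⊕ Y') :=
  ⟨Sum.map f g, f.continuous.sumMap g.continuous⟩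

lemma sumMap_id : (ContinuousMap.id X).sumMap (ContinuousMap.id X') = ContinuousMap.id _ := by
  ext (x | x) <;> rfl

lemma sumMap_comp_sumMap {Z Z' : Type*} [TopologicalSpace Z] [TopologicalSpace Z']
    (f : C(X, Y)) (g : C(X', Y')) (f' : C(Y, Z)) (g' : C(Y', Z')) :
    (f'.sumMap g').comp (f.sumMap g) = (f'.comp f).sumMap (g'.comp g) := by
  ext (x | x) <;> rfl

def Homotopy.sumMap {f₀ f₁ : C(X, Y)} {g₀ g₁ : C(X', Y')} (F : Homotopy f₀ f₁)
    (G : Homotopy g₀ g₁) : Homotopy (f₀.sumMap g₀) (f₁.sumMap g₁) where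
  toContinuousMap := (F.toContinuousMap.sumMap G.toContinuousMap).comp
    ⟨Homeomorph.prodSumDistrib, Homeomorph.prodSumDistrib.continuous⟩
  map_zero_left := by
    rintro (x | x)
    exacts [congrArg Sum.inl (F.apply_zero x), congrArg Sum.inr (G.apply_zero x)]
  map_one_left := by
    rintro (x | x)
    exacts [congrArg Sum.inl (F.apply_one x), congrArg Sum.inr (G.apply_one x)]

lemma Homotopic.sumMap {f₀ f₁ : C(X, Y)} {g₀ g₁ : C(X', Y')} (hf : f₀.Homotopic f₁)
    (hg : g₀.Homotopic g₁) : (f₀.sumMap g₀).Homotopic (f₁.sumMap g₁) :=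
  hf.map2 Homotopy.sumMap hg

def HomotopyEquiv.sumCongr (h : X ≃ₕ Y) (h' : X' ≃ₕ Y') : X ⊕ X' ≃ₕ Y ⊕ Y' where
  toFun := h.toFun.sumMap h'.toFun
  invFun := h.invFun.sumMap h'.invFun
  left_inv := by
    rw [sumMap_comp_sumMap, ← sumMap_id]
    exact h.left_inv.sumMap h'.left_inv
  right_inv := by
    rw [sumMap_comp_sumMap, ← sumMap_id]
    exact h.right_inv.sumMap h'.right_inv

end ContinuousMap

end SumOfSpaces

section SpaceW

open Metric unitInterval
open scoped ContinuousMap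

lemma dotProd_comm (z w : C3) : dotProd z w = dotProd w z := by
  simp only [dotProd, mul_comm]

lemma dotProd_smul_smul (a b : ℝ) (z w : C3) :
    dotProd (a • z) (b • w) = (a * b : ℂ) * dotProd z w := by
  simp only [dotProd, Finset.mul_sum, PiLp.smul_apply, Complex.real_smul]
  exact Finset.sum_congr rfl fun _ _ => by ring

def spaceWFst (ε : ℝ) : Set (C3 × C3) :=
  {p | dotProd p.1 p.2 = 0 ∧ ‖p.1‖ ^ 2 + ‖p.2‖ ^ 2 = 1 ∧ ‖p.1‖ ^ 2 < ε}

lemma spaceW_eq_union (ε : ℝ) : spaceW ε = spaceWFst ε ∪ Prod.swap ⁻¹' spaceWFst ε := by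
  ext ⟨z, w⟩
  simp only [spaceW, spaceWFst, Set.mem_union, Set.mem_preimage, Set.mem_ofPred_eq,
    Prod.fst_swap, Prod.snd_swap, dotProd_comm w z, add_comm (‖w‖ ^ 2)]
  tauto

variable {ε : ℝ}

lemma spaceWFst_subset_sq_norm_lt (hε : ε ≤ 1 / 2) :
    spaceWFst ε ⊆ {p | ‖p.1‖ ^ 2 < ‖p.2‖ ^ 2} :=
  fun _ ⟨_, hsum, hsmall⟩ => by simp only [Set.mem_ofPred_eq]; linarith

lemma separatedNhds_spaceWFst_swap (hε : ε ≤ 1 / 2) :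
    SeparatedNhds (spaceWFst ε) (Prod.swap ⁻¹' spaceWFst ε) := by
  refine ⟨{p | ‖p.1‖ ^ 2 < ‖p.2‖ ^ 2}, {p | ‖p.2‖ ^ 2 < ‖p.1‖ ^ 2},
    isOpen_lt (by fun_prop) (by fun_prop), isOpen_lt (by fun_prop) (by fun_prop),
    spaceWFst_subset_sq_norm_lt hε, fun p hp => spaceWFst_subset_sq_norm_lt hε (a := p.swap) hp,
    Set.disjoint_left.2 fun p (h₁ : ‖p.1‖ ^ 2 < ‖p.2‖ ^ 2) h₂ => h₁.asymm h₂⟩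

noncomputable def spaceWHomeomorphSum (hε : ε ≤ 1 / 2) :
    spaceW ε ≃ₜ spaceWFst ε ⊕ spaceWFst ε :=
  (Homeomorph.setCongr (spaceW_eq_union ε)).trans <|
    (Homeomorph.Set.union (separatedNhds_spaceWFst_swap hε)).trans <|
      Homeomorph.sumCongr (.refl _) ((Homeomorph.prodComm C3 C3).subtype fun _ => Iff.rfl)

noncomputable def shrinkFst (s : ℝ) (p : C3 × C3) : C3 × C3 :=
  (√(s ^ 2 * ‖p.1‖ ^ 2 + ‖p.2‖ ^ 2))⁻¹ • (s • p.1, p.2)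

lemma shrinkFst_zero (p : C3 × C3) : shrinkFst 0 p = (0, ‖p.2‖⁻¹ • p.2) := by
  simp [shrinkFst, Real.sqrt_sq (norm_nonneg _)]

lemma shrinkFst_one {p : C3 × C3} (hp : ‖p.1‖ ^ 2 + ‖p.2‖ ^ 2 = 1) : shrinkFst 1 p = p := by
  simp [shrinkFst, hp]

lemma continuousOn_shrinkFst :
    ContinuousOn (fun x : ℝ × (C3 × C3) => shrinkFst x.1 x.2) {x | x.2.2 ≠ 0} := by
  intro x hx
  apply ContinuousAt.continuousWithinAt
  have : 0 < x.1 ^ 2 * ‖x.2.1‖ ^ 2 + ‖x.2.2‖ ^ 2 := by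
    have := norm_pos_iff.2 hx
    positivity
  unfold shrinkFst
  fun_prop (disch := positivity)

lemma snd_ne_zero_of_mem_spaceWFst (hε : ε ≤ 1) {p : C3 × C3} (hp : p ∈ spaceWFst ε) :
    p.2 ≠ 0 := by
  intro h
  obtain ⟨-, hsum, hsmall⟩ := hp
  simp only [h, norm_zero] at hsum
  linarith

lemma shrinkFst_mem_spaceWFst (hε : ε ≤ 1) {s : ℝ} (hs : s ^ 2 ≤ 1) {p : C3 × C3}
    (hp : p ∈ spaceWFst ε) : shrinkFst s p ∈ spaceWFst ε := by
  have hw := norm_pos_iff.2 (snd_ne_zero_of_mem_spaceWFst hε hp)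
  obtain ⟨hdot, hsum, hsmall⟩ := hp
  have hD : 0 < s ^ 2 * ‖p.1‖ ^ 2 + ‖p.2‖ ^ 2 := by positivity
  have hc : (√(s ^ 2 * ‖p.1‖ ^ 2 + ‖p.2‖ ^ 2))⁻¹ ^ 2 = (s ^ 2 * ‖p.1‖ ^ 2 + ‖p.2‖ ^ 2)⁻¹ := by
    rw [inv_pow, Real.sq_sqrt hD.le]
  simp only [shrinkFst, spaceWFst, Set.mem_ofPred_eq, Prod.smul_fst, Prod.smul_snd, smul_smul,
    dotProd_smul_smul, hdot, mul_zero, norm_smul, mul_pow, Real.norm_eq_abs, sq_abs, hc]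
  refine ⟨trivial, by field_simp, ?_⟩
  rw [mul_assoc, inv_mul_lt_iff₀ hD]
  nlinarith [mul_nonneg (mul_nonneg (sub_nonneg.2 hε) (sub_nonneg.2 hs)) (sq_nonneg ‖p.1‖)]

noncomputable def spaceWFstToSphere (hε : ε ≤ 1) : C(spaceWFst ε, sphere (0 : C3) 1) where
  toFun p := ⟨‖p.1.2‖⁻¹ • p.1.2, by simp [norm_smul, snd_ne_zero_of_mem_spaceWFst hε p.2]⟩
  continuous_toFun := by
    have hw : Continuous fun p : spaceWFst ε => p.1.2 := by fun_prop
    refine .subtype_mk ((hw.norm.inv₀ fun p => ?_).smul hw) _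
    exact norm_ne_zero_iff.2 (snd_ne_zero_of_mem_spaceWFst hε p.2)

def sphereToSpaceWFst (hε : 0 < ε) : C(sphere (0 : C3) 1, spaceWFst ε) where
  toFun w := ⟨(0, w), by simp [spaceWFst, dotProd, hε]⟩

noncomputable def spaceWFstHomotopyEquivSphere (hε₀ : 0 < ε) (hε₁ : ε ≤ 1) :
    spaceWFst ε ≃ₕ sphere (0 : C3) 1 where
  toFun := spaceWFstToSphere hε₁
  invFun := sphereToSpaceWFst hε₀
  left_inv := ⟨{
    toFun x := ⟨shrinkFst x.1 x.2, shrinkFst_mem_spaceWFst hε₁ (pow_le_one₀ x.1.2.1 x.1.2.2) x.2.2⟩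
    continuous_toFun := .subtype_mk (continuousOn_shrinkFst.comp_continuous
      (f := fun x : I × spaceWFst ε => ((x.1 : ℝ), x.2.1)) (by fun_prop)
      fun x => snd_ne_zero_of_mem_spaceWFst hε₁ x.2.2) _
    map_zero_left p := Subtype.ext (shrinkFst_zero p.1)
    map_one_left p := Subtype.ext (shrinkFst_one p.2.2.1) }⟩
  right_inv := by
    convert ContinuousMap.Homotopic.refl _
    ext w : 2
    simp [spaceWFstToSphere, sphereToSpaceWFst]

end SpaceW

theorem W_homotopyEquiv_two_spheres (ε : ℝ) (hε0 : 0 < ε) (hε1 : ε < 1 / 2) :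
    Nonempty (ContinuousMap.HomotopyEquiv (spaceW ε)
      ((Metric.sphere (0 : C3) 1) ⊕ (Metric.sphere (0 : C3) 1))) :=
  have h := spaceWFstHomotopyEquivSphere hε0 (by linarith)
  ⟨(spaceWHomeomorphSum hε1.le).toHomotopyEquiv.trans (h.sumCongr h)⟩
end
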